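/- arXiv:2308.10720 — 2 statements merged into one kernel-verified Lean document; each statement's English description precedes it below -/
import Mathlib

section
/- Let f(x) = √(2 − x) on [−1,1] and let p_M be the Lagrange interpolating polynomial of f at the M Chebyshev nodes. Since the only singularity of f is the real branch point at x = 2, which lies on the Bernstein ellipse of parameter 2 + √3, the error converges geometrically with any rate below 2 + √3: for every ρ with 1 < ρ < 2 + √3, ρ^M · sup_{x ∈ [−1,1]} |p_M(x) − f(x)| → 0 as M → ∞. -/
open scoped Real

/-- The M Chebyshev nodes on [-1,1]: x_k = cos((2k-1)π/(2M)), k = 1,…,M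
(indexed here by k = 0,…,M-1, so x_k = cos((2k+1)π/(2M))). -/
noncomputable def chebNodes (M : ℕ) : Fin M → ℝ :=
  fun k => Real.cos ((2 * (k : ℝ) + 1) * π / (2 * M))

/-- The Lagrange interpolating polynomial of f at the M Chebyshev nodes. -/
noncomputable def chebInterp (M : ℕ) (f : ℝ → ℝ) : Polynomial ℝ :=
  Lagrange.interpolate Finset.univ (chebNodes M) (fun k => f (chebNodes M k))

/-
With α = (√3 + 1)/2 and β = (√3 - 1)/2 one has 2 - cos θ = |α - β e^{iθ}|², so
√(2 - cos θ) = h(e^{iθ}) h(e^{-iθ}) for the principal branch h(z) = (α - βz)^{1/2}, holomorphic on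
|z| < α/β = 2 + √3. Multiplying the Taylor series of h at e^{±iθ} gives a cosine expansion
√(2 - cos θ) = Σ_{j,k} c_{jk} cos(|j - k|θ) with |c_{jk}| ≤ K r^{-(j+k)} for every r < 2 + √3
(Cauchy estimates). Interpolation at the M Chebyshev nodes reproduces cos(n arccos x) = T_n(x) for
n < M and, by aliasing, sends every other mode to a polynomial bounded by 1 on [-1, 1]. Hence the
error is at most 2 Σ_{|j-k| ≥ M} |c_{jk}| = O(s^{-M}) for every s < r.
-/

open scoped Nat
open Complex ComplexConjugate Metric Set

noncomputable def chebAngle (M : ℕ) (k : Fin M) : ℝ := (2 * (k : ℝ) + 1) * π / (2 * M)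

noncomputable def cosArccos (n : ℕ) (x : ℝ) : ℝ := Real.cos (n * Real.arccos x)

section ChebyshevInterpolation

variable {M : ℕ}

lemma chebNodes_eq_cos_chebAngle (k : Fin M) : chebNodes M k = Real.cos (chebAngle M k) := rfl

lemma chebNodes_mem_Icc (k : Fin M) : chebNodes M k ∈ Icc (-1 : ℝ) 1 :=
  ⟨Real.neg_one_le_cos _, Real.cos_le_one _⟩

lemma mul_chebAngle (k : Fin M) : M * chebAngle M k = k * π + π / 2 := by
  have : (M : ℝ) ≠ 0 := Nat.cast_ne_zero.2 k.pos.ne'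
  rw [chebAngle]
  field_simp

lemma two_mul_mul_chebAngle (k : Fin M) : 2 * M * chebAngle M k = (2 * k + 1 : ℕ) * π := by
  rw [mul_assoc, mul_chebAngle]
  push_cast
  ring

lemma cos_add_two_mul_mul_chebAngle (x : ℝ) (k : Fin M) :
    Real.cos (x + 2 * M * chebAngle M k) = -Real.cos x := by
  rw [two_mul_mul_chebAngle, Real.cos_add_nat_mul_pi, (odd_two_mul_add_one _).neg_one_pow, neg_one_mul]

lemma cos_two_mul_mul_chebAngle_sub (x : ℝ) (k : Fin M) :
    Real.cos (2 * M * chebAngle M k - x) = -Real.cos x := by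
  rw [two_mul_mul_chebAngle, Real.cos_nat_mul_pi_sub, (odd_two_mul_add_one _).neg_one_pow, neg_one_mul]

lemma chebAngle_mem_Icc (k : Fin M) : chebAngle M k ∈ Icc 0 π := by
  have hM : (0 : ℝ) < M := Nat.cast_pos.2 k.pos
  have hk : (k : ℝ) + 1 ≤ M := by exact_mod_cast k.isLt
  rw [chebAngle, mem_Icc, div_le_iff₀ (by positivity)]
  exact ⟨by positivity, by nlinarith [Real.pi_pos]⟩

lemma chebNodes_injective : Function.Injective (chebNodes M) := by
  intro k l hkl
  have h := Real.injOn_cos (chebAngle_mem_Icc k) (chebAngle_mem_Icc l) hkl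
  have : (k : ℝ) = l := by
    have := congrArg ((M : ℝ) * ·) h
    simp only [mul_chebAngle] at this
    nlinarith [Real.pi_pos]
  exact Fin.ext (by exact_mod_cast this)

lemma cosArccos_chebNodes (n : ℕ) (k : Fin M) :
    cosArccos n (chebNodes M k) = Real.cos (n * chebAngle M k) := by
  rw [cosArccos, chebNodes_eq_cos_chebAngle,
    Real.arccos_cos (chebAngle_mem_Icc k).1 (chebAngle_mem_Icc k).2]

lemma cosArccos_eq_eval_T (n : ℕ) {x : ℝ} (hx : x ∈ Icc (-1 : ℝ) 1) :
    cosArccos n x = (Polynomial.Chebyshev.T ℝ n).eval x := by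
  rw [← Real.cos_arccos hx.1 hx.2, Polynomial.Chebyshev.T_real_cos, Real.cos_arccos hx.1 hx.2,
    cosArccos]
  norm_cast

lemma chebInterp_congr {f g : ℝ → ℝ} (h : ∀ k, f (chebNodes M k) = g (chebNodes M k)) :
    chebInterp M f = chebInterp M g := by
  simp only [chebInterp, h]

lemma chebInterp_neg (f : ℝ → ℝ) : chebInterp M (fun x => -f x) = -chebInterp M f :=
  map_neg (Lagrange.interpolate Finset.univ (chebNodes M)) (fun k => f (chebNodes M k))

lemma eval_chebInterp (f : ℝ → ℝ) (x : ℝ) :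
    (chebInterp M f).eval x =
      ∑ k, f (chebNodes M k) * (Lagrange.basis Finset.univ (chebNodes M) k).eval x := by
  simp only [chebInterp, Lagrange.interpolate_apply, Polynomial.eval_finsetSum,
    Polynomial.eval_mul, Polynomial.eval_C]

lemma chebInterp_cosArccos_of_lt {n : ℕ} (hn : n < M) :
    chebInterp M (cosArccos n) = Polynomial.Chebyshev.T ℝ n := by
  refine (Lagrange.eq_interpolate_of_eval_eq _ chebNodes_injective.injOn ?_ ?_).symm
  · rw [Polynomial.Chebyshev.degree_T, Finset.card_univ, Fintype.card_fin]
    exact_mod_cast hn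
  · exact fun k _ => (cosArccos_eq_eval_T n (chebNodes_mem_Icc k)).symm

lemma chebInterp_cosArccos_self : chebInterp M (cosArccos M) = 0 := by
  have h : ∀ k : Fin M, cosArccos M (chebNodes M k) = (fun _ => 0) (chebNodes M k) := by
    intro k
    rw [cosArccos_chebNodes, mul_chebAngle, Real.cos_add_pi_div_two, Real.sin_nat_mul_pi, neg_zero]
  rw [chebInterp_congr (g := fun _ => 0) h]
  exact map_zero (Lagrange.interpolate Finset.univ (chebNodes M))

lemma chebInterp_cosArccos_add_two_mul (n : ℕ) :
    chebInterp M (cosArccos (n + 2 * M)) = -chebInterp M (cosArccos n) := by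
  rw [← chebInterp_neg]
  refine chebInterp_congr fun k => ?_
  rw [cosArccos_chebNodes, cosArccos_chebNodes]
  push_cast
  rw [add_mul, cos_add_two_mul_mul_chebAngle]

lemma chebInterp_cosArccos_two_mul_sub {n : ℕ} (hn : n ≤ 2 * M) :
    chebInterp M (cosArccos (2 * M - n)) = -chebInterp M (cosArccos n) := by
  rw [← chebInterp_neg]
  refine chebInterp_congr fun k => ?_
  rw [cosArccos_chebNodes, cosArccos_chebNodes, Nat.cast_sub hn]
  push_cast
  rw [sub_mul, cos_two_mul_mul_chebAngle_sub]

/- Aliasing: at the nodes the modes `n + 2M` and `2M - n` agree with `-(mode n)`, so every mode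
interpolates to `±T_m` for some `m < M`, or to `0`. -/
lemma abs_eval_chebInterp_cosArccos_le (n : ℕ) {x : ℝ} (hx : x ∈ Icc (-1 : ℝ) 1) :
    |(chebInterp M (cosArccos n)).eval x| ≤ 1 := by
  rcases M.eq_zero_or_pos with rfl | hM
  · simp [chebInterp]
  induction n using Nat.strong_induction_on with
  | _ n ih =>
    rcases lt_trichotomy n M with hlt | rfl | hgt
    · rw [chebInterp_cosArccos_of_lt hlt, ← cosArccos_eq_eval_T n hx]
      exact Real.abs_cos_le_one _
    · simp [chebInterp_cosArccos_self]
    · rcases lt_or_ge n (2 * M) with h2 | h2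
      · have h := chebInterp_cosArccos_two_mul_sub (M := M) (n := 2 * M - n) (by omega)
        rw [Nat.sub_sub_self h2.le] at h
        rw [h, Polynomial.eval_neg, abs_neg]
        exact ih _ (by omega)
      · obtain ⟨m, rfl⟩ := Nat.exists_eq_add_of_le' h2
        rw [chebInterp_cosArccos_add_two_mul, Polynomial.eval_neg, abs_neg]
        exact ih m (by omega)

variable {ι : Type*} {g : ℝ → ℝ} {c : ι → ℝ} {d : ι → ℕ}

lemma hasSum_eval_chebInterp
    (hg : ∀ x ∈ Icc (-1 : ℝ) 1, HasSum (fun i => c i * cosArccos (d i) x) (g x)) (x : ℝ) :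
    HasSum (fun i => c i * (chebInterp M (cosArccos (d i))).eval x) ((chebInterp M g).eval x) := by
  have h := hasSum_sum fun k (_ : k ∈ Finset.univ) =>
    (hg _ (chebNodes_mem_Icc k)).mul_right ((Lagrange.basis Finset.univ (chebNodes M) k).eval x)
  simpa only [eval_chebInterp, Finset.mul_sum, mul_assoc] using h

theorem abs_eval_chebInterp_sub_le (hc : Summable fun i => |c i|)
    (hg : ∀ x ∈ Icc (-1 : ℝ) 1, HasSum (fun i => c i * cosArccos (d i) x) (g x))
    {x : ℝ} (hx : x ∈ Icc (-1 : ℝ) 1) :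
    |(chebInterp M g).eval x - g x| ≤ ∑' i, if M ≤ d i then 2 * |c i| else 0 := by
  have hbound : ∀ i, ‖c i * (chebInterp M (cosArccos (d i))).eval x - c i * cosArccos (d i) x‖ ≤
      if M ≤ d i then 2 * |c i| else 0 := by
    intro i
    split_ifs with hi
    · have h1 := abs_eval_chebInterp_cosArccos_le (M := M) (d i) hx
      have h2 := Real.abs_cos_le_one (d i * Real.arccos x)
      rw [Real.norm_eq_abs, ← mul_sub, abs_mul, mul_comm 2]
      exact mul_le_mul_of_nonneg_left ((abs_sub _ _).trans (by rw [cosArccos]; linarith))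
        (abs_nonneg _)
    · rw [chebInterp_cosArccos_of_lt (not_le.1 hi), cosArccos_eq_eval_T _ hx, sub_self, norm_zero]
  have hsum : Summable fun i => if M ≤ d i then 2 * |c i| else 0 :=
    (hc.mul_left 2).of_nonneg_of_le (fun i => by split_ifs <;> positivity)
      (fun i => by split_ifs <;> [exact le_rfl; positivity])
  exact ((hasSum_eval_chebInterp hg x).sub (hg x hx)).norm_le_of_bounded hsum.hasSum hbound

end ChebyshevInterpolation

noncomputable def taylorCoeff (h : ℂ → ℂ) (n : ℕ) : ℂ := (n ! : ℂ)⁻¹ * iteratedDeriv n h 0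

section TaylorCoeff

variable {h : ℂ → ℂ} {R r : ℝ}

lemma hasSum_taylorCoeff (hh : DifferentiableOn ℂ h (ball 0 R)) {z : ℂ} (hz : ‖z‖ < R) :
    HasSum (fun n => taylorCoeff h n * z ^ n) (h z) := by
  have h := Complex.hasSum_taylorSeries_on_ball hh (mem_ball_zero_iff.2 hz)
  simp only [sub_zero, smul_eq_mul] at h
  exact h.congr_fun fun n => by rw [taylorCoeff]; ring

lemma norm_taylorCoeff_le {C : ℝ} (hh : DifferentiableOn ℂ h (ball 0 R)) (hr : 0 < r)
    (hrR : r < R) (hC : ∀ z ∈ sphere (0 : ℂ) r, ‖h z‖ ≤ C) (n : ℕ) :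
    ‖taylorCoeff h n‖ ≤ C * r⁻¹ ^ n := by
  have hD := Complex.norm_iteratedDeriv_le_of_forall_mem_sphere_norm_le n hr
    (hh.diffContOnCl_ball (closedBall_subset_ball hrR)) hC
  have hn : (0 : ℝ) < n ! := by exact_mod_cast n.factorial_pos
  rw [taylorCoeff, norm_mul, norm_inv, Complex.norm_natCast, inv_mul_le_iff₀ hn, inv_pow,
    ← div_eq_mul_inv, ← mul_div_assoc]
  exact hD

lemma exists_norm_taylorCoeff_le (hh : DifferentiableOn ℂ h (ball 0 R)) (hr : 0 < r)
    (hrR : r < R) : ∃ C, ∀ n, ‖taylorCoeff h n‖ ≤ C * r⁻¹ ^ n := by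
  obtain ⟨C, hC⟩ := (isCompact_sphere (0 : ℂ) r).exists_bound_of_continuousOn
    (hh.continuousOn.mono (sphere_subset_closedBall.trans (closedBall_subset_ball hrR)))
  exact ⟨C, norm_taylorCoeff_le hh hr hrR hC⟩

lemma summable_norm_taylorCoeff (hh : DifferentiableOn ℂ h (ball 0 R)) (hR : 1 < R) :
    Summable fun n => ‖taylorCoeff h n‖ := by
  obtain ⟨r, hr1, hrR⟩ := exists_between hR
  obtain ⟨C, hC⟩ := exists_norm_taylorCoeff_le hh (one_pos.trans hr1) hrR
  exact Summable.of_nonneg_of_le (fun n => norm_nonneg _) hC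
    ((summable_geometric_of_lt_one (by positivity) (inv_lt_one_of_one_lt₀ hr1)).mul_left C)

end TaylorCoeff

lemma cos_sub_mul_eq_cos_dist_mul (j k : ℕ) (θ : ℝ) :
    Real.cos ((j - k : ℝ) * θ) = Real.cos (Nat.dist j k * θ) := by
  rcases le_total j k with h | h
  · rw [Nat.dist_eq_sub_of_le h, Nat.cast_sub h, ← Real.cos_neg, ← neg_mul, neg_sub]
  · rw [Nat.dist_eq_sub_of_le_right h, Nat.cast_sub h]

theorem hasSum_re_mul_cos {a : ℕ → ℂ} {F : ℂ → ℂ} (ha : Summable fun n => ‖a n‖)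
    (hF : ∀ z : ℂ, ‖z‖ = 1 → HasSum (fun n => a n * z ^ n) (F z)) (θ : ℝ) :
    HasSum (fun p : ℕ × ℕ => (a p.1 * a p.2).re * Real.cos (Nat.dist p.1 p.2 * θ))
      (F (exp (θ * I)) * F (exp (-θ * I))).re := by
  have hcircle : ∀ t : ℝ, HasSum (fun n => a n * exp (t * I) ^ n) (F (exp (t * I))) := fun t =>
    hF _ (norm_exp_ofReal_mul_I t)
  have hnorm : ∀ t : ℝ, Summable fun n => ‖a n * exp (t * I) ^ n‖ := fun t => by
    simpa only [norm_mul, norm_pow, norm_exp_ofReal_mul_I, one_pow, mul_one] using ha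
  have hs := summable_mul_of_summable_norm (hnorm θ) (hnorm (-θ))
  have hprod := (hcircle θ).mul (hcircle (-θ)) hs
  -- averaging over the swap `(j, k) ↦ (k, j)` cancels the sine parts
  have hsym := (hprod.add ((Equiv.prodComm ℕ ℕ).hasSum_iff.2 hprod)).div_const 2
  rw [← two_mul, mul_div_cancel_left₀ _ two_ne_zero, ofReal_neg] at hsym
  refine (Complex.hasSum_re hsym).congr_fun fun p => ?_
  simp only [Function.comp_apply, Equiv.prodComm_apply, Prod.fst_swap, Prod.snd_swap]
  rw [← cos_sub_mul_eq_cos_dist_mul, ← re_mul_ofReal, ofReal_cos, Complex.cos]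
  congr 1
  simp only [← Complex.exp_nat_mul]
  push_cast
  ring_nf
  simp only [mul_assoc, ← Complex.exp_add]
  ring_nf

/- `2 - cos θ = ‖twoSubCosFactor (exp (θ * I))‖ ^ 2`, with the only zero at `2 + √3`. -/
noncomputable def twoSubCosFactor (z : ℂ) : ℂ := ((√3 + 1) / 2 : ℝ) - ((√3 - 1) / 2 : ℝ) * z

noncomputable def sqrtTwoSubCosFactor (z : ℂ) : ℂ := twoSubCosFactor z ^ (1 / 2 : ℂ)

lemma re_twoSubCosFactor_pos {z : ℂ} (hz : ‖z‖ < 2 + √3) : 0 < (twoSubCosFactor z).re := by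
  have h3 := Real.sq_sqrt (show (0 : ℝ) ≤ 3 by norm_num)
  have hβ : 0 ≤ (√3 - 1) / 2 := by linarith [Real.one_le_sqrt.2 (show (1 : ℝ) ≤ 3 by norm_num)]
  have hre : z.re ≤ ‖z‖ := re_le_norm z
  simp only [twoSubCosFactor, sub_re, ofReal_re, re_ofReal_mul]
  nlinarith [mul_le_mul_of_nonneg_left (hre.trans hz.le) hβ]

lemma twoSubCosFactor_conj (z : ℂ) : twoSubCosFactor (conj z) = conj (twoSubCosFactor z) := by
  simp [twoSubCosFactor, map_ofNat]

lemma norm_twoSubCosFactor_exp_sq (θ : ℝ) :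
    ‖twoSubCosFactor (exp (θ * I))‖ ^ 2 = 2 - Real.cos θ := by
  have h3 := Real.sq_sqrt (show (0 : ℝ) ≤ 3 by norm_num)
  rw [Complex.sq_norm, Complex.normSq_apply]
  simp only [twoSubCosFactor, sub_re, sub_im, re_ofReal_mul, im_ofReal_mul, ofReal_re, ofReal_im,
    exp_ofReal_mul_I_re, exp_ofReal_mul_I_im]
  linear_combination ((√3 - 1) / 2) ^ 2 * Real.sin_sq_add_cos_sq θ + (1 - Real.cos θ) / 2 * h3

lemma differentiableOn_sqrtTwoSubCosFactor :
    DifferentiableOn ℂ sqrtTwoSubCosFactor (ball 0 (2 + √3)) := fun _ hz =>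
  (((differentiableAt_const _).sub (differentiableAt_const _ |>.mul differentiableAt_id)).cpow_const
    (Or.inl (re_twoSubCosFactor_pos (mem_ball_zero_iff.1 hz)))).differentiableWithinAt

lemma norm_sqrtTwoSubCosFactor (z : ℂ) : ‖sqrtTwoSubCosFactor z‖ = √‖twoSubCosFactor z‖ := by
  rw [sqrtTwoSubCosFactor, show (1 / 2 : ℂ) = ((1 / 2 : ℝ) : ℂ) by push_cast; rfl,
    norm_cpow_real, Real.sqrt_eq_rpow]

lemma sqrtTwoSubCosFactor_exp_mul_sqrtTwoSubCosFactor_exp_neg (θ : ℝ) :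
    sqrtTwoSubCosFactor (exp (θ * I)) * sqrtTwoSubCosFactor (exp (-θ * I)) = √(2 - Real.cos θ) := by
  have hre := re_twoSubCosFactor_pos (z := exp (θ * I)) (by
    rw [norm_exp_ofReal_mul_I]; linarith [Real.sqrt_nonneg 3])
  have hconj : sqrtTwoSubCosFactor (exp (-θ * I)) = conj (sqrtTwoSubCosFactor (exp (θ * I))) := by
    have harg : (conj (twoSubCosFactor (exp (θ * I)))).arg ≠ π := by
      rw [Ne, arg_eq_pi_iff, conj_re]
      exact fun h => (lt_asymm hre h.1).elim
    have h := cpow_conj _ (1 / 2) harg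
    rw [conj_conj, map_div₀, map_one, map_ofNat] at h
    rw [sqrtTwoSubCosFactor, sqrtTwoSubCosFactor, ← h, ← twoSubCosFactor_conj, ← exp_conj,
      map_mul, conj_ofReal, conj_I, mul_neg, neg_mul]
  rw [hconj, mul_conj, normSq_eq_norm_sq, norm_sqrtTwoSubCosFactor, Real.sq_sqrt (norm_nonneg _),
    ← Real.sqrt_sq (norm_nonneg _), norm_twoSubCosFactor_exp_sq]

theorem exists_cosArccos_expansion_sqrt_two_sub {r : ℝ} (hr1 : 1 < r) (hr : r < 2 + √3) :
    ∃ (c : ℕ × ℕ → ℝ) (K : ℝ), (∀ p, |c p| ≤ K * r⁻¹ ^ (p.1 + p.2)) ∧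
      ∀ x ∈ Icc (-1 : ℝ) 1, HasSum (fun p => c p * cosArccos (Nat.dist p.1 p.2) x) √(2 - x) := by
  set a := taylorCoeff sqrtTwoSubCosFactor
  obtain ⟨C, hC⟩ := exists_norm_taylorCoeff_le differentiableOn_sqrtTwoSubCosFactor
    (one_pos.trans hr1) hr
  refine ⟨fun p => (a p.1 * a p.2).re, C * C, fun p => ?_, fun x hx => ?_⟩
  · calc |(a p.1 * a p.2).re| ≤ ‖a p.1‖ * ‖a p.2‖ := (abs_re_le_norm _).trans (norm_mul _ _).le
      _ ≤ C * r⁻¹ ^ p.1 * (C * r⁻¹ ^ p.2) :=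
        mul_le_mul (hC _) (hC _) (norm_nonneg _) ((norm_nonneg _).trans (hC _))
      _ = C * C * r⁻¹ ^ (p.1 + p.2) := by ring
  · have hR : (1 : ℝ) < 2 + √3 := hr1.trans hr
    have h := hasSum_re_mul_cos (summable_norm_taylorCoeff differentiableOn_sqrtTwoSubCosFactor hR)
      (fun z hz => hasSum_taylorCoeff differentiableOn_sqrtTwoSubCosFactor (hz ▸ hR))
      (Real.arccos x)
    rwa [sqrtTwoSubCosFactor_exp_mul_sqrtTwoSubCosFactor_exp_neg, ofReal_re,
      Real.cos_arccos hx.1 hx.2] at h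

lemma hasSum_pow_add {w : ℝ} (h0 : 0 ≤ w) (h1 : w < 1) :
    HasSum (fun p : ℕ × ℕ => w ^ (p.1 + p.2)) ((1 - w)⁻¹ ^ 2) := by
  have hg := hasSum_geometric_of_lt_one h0 h1
  have hs := hg.summable.mul_of_nonneg hg.summable (fun n => by positivity) (fun n => by positivity)
  simpa only [pow_add, sq] using hg.mul hg hs

lemma tsum_dist_tail_le {c : ℕ × ℕ → ℝ} {K v s : ℝ} (hc : ∀ p, |c p| ≤ K * v ^ (p.1 + p.2))
    (hv : 0 ≤ v) (hvs : v < s) (hs : s ≤ 1) (M : ℕ) :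
    ∑' p, (if M ≤ Nat.dist p.1 p.2 then 2 * |c p| else 0) ≤ 2 * K * (1 - v / s)⁻¹ ^ 2 * s ^ M := by
  have hs0 : 0 < s := hv.trans_lt hvs
  have hK : 0 ≤ K := by simpa using (abs_nonneg _).trans (hc (0, 0))
  have hterm : ∀ p : ℕ × ℕ, (if M ≤ Nat.dist p.1 p.2 then 2 * |c p| else 0) ≤
      2 * K * s ^ M * (v / s) ^ (p.1 + p.2) := by
    intro p
    split_ifs with hp
    · have hMp : M ≤ p.1 + p.2 := hp.trans (by unfold Nat.dist; omega)
      calc 2 * |c p| ≤ 2 * K * (v / s) ^ (p.1 + p.2) * s ^ (p.1 + p.2) := by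
            rw [mul_assoc _ _ (s ^ _), ← mul_pow, div_mul_cancel₀ _ hs0.ne', mul_assoc]
            linarith [hc p]
        _ ≤ 2 * K * (v / s) ^ (p.1 + p.2) * s ^ M := by
            gcongr 2 * K * (v / s) ^ (p.1 + p.2) * ?_
            exact pow_le_pow_of_le_one hs0.le hs hMp
        _ = _ := by ring
    · positivity
  have hgeom := (hasSum_pow_add (by positivity) ((div_lt_one hs0).2 hvs)).mul_left (2 * K * s ^ M)
  have hsum : Summable fun p : ℕ × ℕ => if M ≤ Nat.dist p.1 p.2 then 2 * |c p| else 0 :=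
    hgeom.summable.of_nonneg_of_le (fun p => by split_ifs <;> positivity) hterm
  calc _ ≤ 2 * K * s ^ M * (1 - v / s)⁻¹ ^ 2 := hasSum_le hterm hsum.hasSum hgeom
    _ = _ := by ring

/-- Let f(x) = √(2 − x) on [−1,1] and p_M its Lagrange interpolant at the M
Chebyshev nodes. Since the only singularity of f is the real branch point at x = 2, which
lies on the Bernstein ellipse of parameter 2 + √3, the error converges geometrically with
any rate below 2 + √3: for every ρ with 1 < ρ < 2 + √3,
ρ^M · sup_{x ∈ [−1,1]} |p_M(x) − f(x)| → 0 as M → ∞. -/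
theorem stmt_13 :
    ∀ ρ : ℝ, 1 < ρ → ρ < 2 + Real.sqrt 3 →
      Filter.Tendsto (fun M : ℕ =>
          ρ ^ M *
            ⨆ x : Set.Icc (-1 : ℝ) 1,
              |(chebInterp M (fun t => Real.sqrt (2 - t))).eval (x : ℝ) -
                Real.sqrt (2 - (x : ℝ))|)
        Filter.atTop (nhds 0) := by
  intro ρ hρ1 hρ2
  obtain ⟨s, hρs, hs⟩ := exists_between hρ2
  obtain ⟨r, hsr, hr⟩ := exists_between hs
  have hρ0 : 0 < ρ := one_pos.trans hρ1
  have hs1 : 1 < s := hρ1.trans hρs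
  have hr1 : 1 < r := hs1.trans hsr
  have hr0 : 0 < r := one_pos.trans hr1
  obtain ⟨c, K, hc, hexp⟩ := exists_cosArccos_expansion_sqrt_two_sub hr1 hr
  have hcsum : Summable fun p => |c p| :=
    ((hasSum_pow_add (by positivity) (inv_lt_one_of_one_lt₀ hr1)).summable.mul_left K).of_nonneg_of_le
      (fun _ => abs_nonneg _) hc
  have : Nonempty (Icc (-1 : ℝ) 1) := ⟨⟨0, by norm_num⟩⟩
  have herr (M : ℕ) : ⨆ x : Icc (-1 : ℝ) 1,
      |(chebInterp M (fun t => √(2 - t))).eval (x : ℝ) - √(2 - (x : ℝ))| ≤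
        2 * K * (1 - r⁻¹ / s⁻¹)⁻¹ ^ 2 * s⁻¹ ^ M :=
    ciSup_le fun x => (abs_eval_chebInterp_sub_le hcsum hexp x.2).trans
      (tsum_dist_tail_le hc (by positivity) (inv_strictAnti₀ (by positivity) hsr)
        (inv_le_one_of_one_le₀ hs1.le) M)
  refine squeeze_zero (fun M => mul_nonneg (by positivity) (Real.iSup_nonneg fun _ => abs_nonneg _))
    (fun M => (mul_le_mul_of_nonneg_left (herr M) (by positivity)).trans_eq
      (by rw [mul_left_comm, ← mul_pow, ← div_eq_mul_inv])) ?_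
  simpa only [mul_zero] using (tendsto_pow_atTop_nhds_zero_of_lt_one (by positivity)
    ((div_lt_one (by positivity)).2 hρs)).const_mul (2 * K * (1 - r⁻¹ / s⁻¹)⁻¹ ^ 2)
end

section
/- Let σ(t) = 1/(1 + exp(−t)) be the logistic sigmoid, let M ≤ N, and let x₁ < ⋯ < x_M be distinct real numbers. Then the set of parameter vectors (a₁,…,a_N, b₁,…,b_N) ∈ ℝ^N × ℝ^N for which the M × N collocation matrix S with entries S_{ji} = σ(a_i x_j + b_i) has rank strictly less than M has Lebesgue measure zero in ℝ^{2N}; consequently, for almost every random choice of internal parameters the overparametrized interpolation system S·w = y admits a solution w ∈ ℝ^N for every y ∈ ℝ^M. -/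
/-!
A real-analytic function on `ℝ` that is not identically zero has isolated, hence countably many,
zeros; by Fubini and induction on the dimension, the zero set of a nontrivial analytic function on
`ℝⁿ` is Lebesgue-null. The determinant of the first `M` columns of the collocation
matrix is analytic in `(a, b)`, and it is nonzero for `aᵢ = t`, `bᵢ = -t xᵢ` with `t` large:
there the entries `σ(t (xⱼ - xᵢ))` approach a lower triangular matrix with diagonal `σ 0 = 1/2`.
Off the null zero set of this determinant the collocation matrix has full row rank.
-/

open MeasureTheory Matrix Filter Set Topology Real

def AnalyticZerosNull {E : Type*} [NormedAddCommGroup E] [NormedSpace ℝ E] [MeasurableSpace E]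
    (μ : Measure E) : Prop :=
  ∀ f : E → ℝ, AnalyticOnNhd ℝ f univ → (∃ z, f z ≠ 0) → μ {x | f x = 0} = 0

theorem AnalyticOnNhd.countable_setOf_eq_zero {F : Type*} [NormedAddCommGroup F]
    [NormedSpace ℝ F] {f : ℝ → F} (hf : AnalyticOnNhd ℝ f univ) (hz : ∃ z, f z ≠ 0) :
    {x | f x = 0}.Countable := by
  obtain h0 | h1 := hf.eqOn_zero_or_eventually_ne_zero_of_preconnected isPreconnected_univ
  · obtain ⟨z, hz⟩ := hz
    exact absurd (h0 (mem_univ z)) hz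
  · have hdisc : IsDiscrete ({x | f x = 0} ∩ univ) :=
      isDiscrete_of_codiscreteWithin h1
    rw [inter_univ] at hdisc
    exact (HereditarilyLindelofSpace.isLindelof _).countable_of_isDiscrete hdisc

theorem analyticZerosNull_of_nullSingletonClass (μ : Measure ℝ) [NullSingletonClass μ] :
    AnalyticZerosNull μ :=
  fun _ hf hz => (hf.countable_setOf_eq_zero hz).measure_zero μ

section

variable {E F : Type*} [NormedAddCommGroup E] [NormedSpace ℝ E] [MeasurableSpace E]
  [NormedAddCommGroup F] [NormedSpace ℝ F] [MeasurableSpace F] {μ : Measure E} {ν : Measure F}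

theorem AnalyticZerosNull.prod [SFinite ν] [OpensMeasurableSpace (E × F)]
    (hμ : AnalyticZerosNull μ) (hν : AnalyticZerosNull ν) : AnalyticZerosNull (μ.prod ν) := by
  rintro f hf ⟨z, hz⟩
  rw [Measure.measure_prod_null (isClosed_eq hf.continuous continuous_const).measurableSet]
  have hbad : μ {x | f (x, z.2) = 0} = 0 := hμ _ (by simpa using hf.curry_left) ⟨z.1, hz⟩
  filter_upwards [measure_eq_zero_iff_ae_notMem.mp hbad] with x hx
  exact hν _ (by simpa using hf.curry_right) ⟨z.2, hx⟩

theorem AnalyticZerosNull.of_measurePreserving [OpensMeasurableSpace F]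
    (hμ : AnalyticZerosNull μ) (g : E ≃L[ℝ] F) (hg : MeasurePreserving g μ ν) :
    AnalyticZerosNull ν := by
  rintro f hf ⟨z, hz⟩
  rw [← hg.measure_preimage
    (isClosed_eq hf.continuous continuous_const).measurableSet.nullMeasurableSet]
  exact hμ (f ∘ g) (hf.comp ((g : E →L[ℝ] F).analyticOnNhd univ) (mapsTo_univ _ _))
    ⟨g.symm z, by simpa using hz⟩

end

theorem analyticZerosNull_volume_pi : ∀ n : ℕ, AnalyticZerosNull (volume : Measure (Fin n → ℝ))
  | 0 => by
    rintro f - ⟨z, hz⟩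
    convert measure_empty (μ := (volume : Measure (Fin 0 → ℝ)))
    exact eq_empty_of_forall_notMem fun x hx => hz (Subsingleton.elim x z ▸ hx)
  | n + 1 => by
    refine ((analyticZerosNull_of_nullSingletonClass volume).prod (analyticZerosNull_volume_pi n))
      |>.of_measurePreserving (Fin.consEquivL ℝ fun _ => ℝ) ?_
    have hcons : ⇑(Fin.consEquivL ℝ fun _ : Fin (n + 1) => ℝ) =
        (MeasurableEquiv.piFinSuccAbove (fun _ : Fin (n + 1) => ℝ) 0).symm := by
      funext p
      simp only [MeasurableEquiv.piFinSuccAbove_symm_apply, Fin.insertNthEquiv_zero]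
      rfl
    rw [hcons]
    exact (volume_preserving_piFinSuccAbove (fun _ : Fin (n + 1) => ℝ) 0).symm

theorem AnalyticOnNhd.matrix_det {𝕜 E : Type*} [NontriviallyNormedField 𝕜]
    [NormedAddCommGroup E] [NormedSpace 𝕜 E] {n : Type*} [Fintype n] [DecidableEq n]
    {A : E → Matrix n n 𝕜} {s : Set E} (hA : ∀ i j, AnalyticOnNhd 𝕜 (fun x => A x i j) s) :
    AnalyticOnNhd 𝕜 (fun x => (A x).det) s := by
  simp_rw [det_apply, Units.smul_def, zsmul_eq_mul]
  exact Finset.analyticOnNhd_fun_sum _ fun σ _ =>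
    analyticOnNhd_const.mul (Finset.analyticOnNhd_fun_prod _ fun i _ => hA _ _)

theorem Matrix.rank_eq_card_of_det_submatrix_ne_zero {m n K : Type*} [Fintype m] [Fintype n]
    [DecidableEq m] [Field K] (A : Matrix m n K) (c : m → n) (h : (A.submatrix id c).det ≠ 0) :
    A.rank = Fintype.card m :=
  le_antisymm A.rank_le_card_height <| by
    rw [← rank_of_isUnit _ ((isUnit_iff_isUnit_det _).mpr (isUnit_iff_ne_zero.mpr h))]
    exact rank_submatrix_le A id c

theorem Matrix.mulVec_surjective_of_rank_eq_card {m n K : Type*} [Fintype m] [Fintype n] [Field K]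
    (A : Matrix m n K) (h : A.rank = Fintype.card m) : Function.Surjective A.mulVec := by
  have hrange : LinearMap.range A.mulVecLin = ⊤ :=
    Submodule.eq_top_of_finrank_eq (by simpa [rank] using h)
  exact LinearMap.range_eq_top.mp hrange

noncomputable def collocationMatrix {m n : Type*} (x : m → ℝ) (a b : n → ℝ) : Matrix m n ℝ :=
  of fun j i => sigmoid (a i * x j + b i)

theorem analyticOnNhd_det_collocationMatrix_submatrix {m n : Type*} [Fintype m] [DecidableEq m]
    [Fintype n] (x : m → ℝ) (c : m → n) :
    AnalyticOnNhd ℝ (fun p : (n → ℝ) × (n → ℝ) =>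
      ((collocationMatrix x p.1 p.2).submatrix id c).det) univ :=
  AnalyticOnNhd.matrix_det fun j i =>
    analyticOnNhd_sigmoid.comp (fun p _ => by
      have hcoord (v : n → ℝ) : AnalyticAt ℝ (fun w : n → ℝ => w (c i)) v :=
        (ContinuousLinearMap.proj (R := ℝ) (φ := fun _ : n => ℝ) (c i)).analyticAt v
      exact (((hcoord p.1).comp analyticAt_fst).fun_mul analyticAt_const).fun_add
        ((hcoord p.2).comp analyticAt_snd))
      (mapsTo_univ _ _)

theorem tendsto_sigmoid_mul_atTop_of_pos {d : ℝ} (hd : 0 < d) :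
    Tendsto (fun t => sigmoid (t * d)) atTop (𝓝 1) :=
  tendsto_sigmoid_atTop.comp (tendsto_id.atTop_mul_const hd)

theorem tendsto_sigmoid_mul_atTop_of_neg {d : ℝ} (hd : d < 0) :
    Tendsto (fun t => sigmoid (t * d)) atTop (𝓝 0) :=
  tendsto_sigmoid_atBot.comp (tendsto_id.atTop_mul_const_of_neg hd)

section
variable {m n : Type*} [LinearOrder m] {x : m → ℝ}

theorem tendsto_collocationMatrix_atTop (hx : StrictMono x) :
    Tendsto (fun t => collocationMatrix x (fun _ => t) (fun i => -(t * x i))) atTop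
      (𝓝 (of fun j i => if i < j then 1 else if i = j then 2⁻¹ else 0)) := by
  refine tendsto_pi_nhds.mpr fun j => tendsto_pi_nhds.mpr fun i => ?_
  have hentry : ∀ t, collocationMatrix x (fun _ => t) (fun i => -(t * x i)) j i =
      sigmoid (t * (x j - x i)) := fun t => by
    simp only [collocationMatrix, of_apply]
    ring_nf
  simp only [hentry, of_apply]
  rcases lt_trichotomy i j with hij | rfl | hji
  · simpa [hij] using tendsto_sigmoid_mul_atTop_of_pos (sub_pos.mpr (hx hij))
  · simp [sigmoid_zero]
  · simpa [hji.not_gt, hji.ne'] using tendsto_sigmoid_mul_atTop_of_neg (sub_neg.mpr (hx hji))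

theorem exists_det_collocationMatrix_ne_zero [Fintype m] (hx : StrictMono x) :
    ∃ a b : m → ℝ, (collocationMatrix x a b).det ≠ 0 := by
  set L : Matrix m m ℝ := of fun j i => if i < j then 1 else if i = j then 2⁻¹ else 0
  have hL : L.det ≠ 0 := by
    rw [det_of_isLowerTriangular L fun j i hji => by
      have hji : j < i := OrderDual.toDual_lt_toDual.mp hji
      simp [L, hji.not_gt, hji.ne']]
    simp [L]
  obtain ⟨t, ht⟩ := ((continuous_id.matrix_det.tendsto L).comp
    (tendsto_collocationMatrix_atTop hx) |>.eventually_ne hL).exists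
  exact ⟨_, _, ht⟩

theorem exists_det_collocationMatrix_submatrix_ne_zero [Fintype m] (hx : StrictMono x)
    {c : m → n} (hc : Function.Injective c) :
    ∃ p : (n → ℝ) × (n → ℝ), ((collocationMatrix x p.1 p.2).submatrix id c).det ≠ 0 := by
  obtain ⟨a, b, hab⟩ := exists_det_collocationMatrix_ne_zero hx
  refine ⟨(Function.extend c a 0, Function.extend c b 0), ?_⟩
  have hsub : (collocationMatrix x (Function.extend c a 0) (Function.extend c b 0)).submatrix id c =
      collocationMatrix x a b := by
    ext j i
    simp [collocationMatrix, hc.extend_apply]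
  rwa [hsub]

end

/-- Let σ be the logistic sigmoid, M ≤ N, and x₁ < ⋯ < x_M distinct reals.
The set of parameter vectors (a, b) ∈ ℝ^N × ℝ^N for which the M × N collocation matrix
S_{ji} = σ(aᵢ xⱼ + bᵢ) has rank < M has Lebesgue measure zero in ℝ^{2N}; consequently,
for almost every random choice of internal parameters the overparametrized interpolation
system S·w = y admits a solution w ∈ ℝ^N for every y ∈ ℝ^M. -/
theorem stmt_19 (M N : ℕ) (hMN : M ≤ N) (x : Fin M → ℝ) (hx : StrictMono x) :
    volume {p : (Fin N → ℝ) × (Fin N → ℝ) |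
      (Matrix.of fun (j : Fin M) (i : Fin N) =>
        1 / (1 + Real.exp (-(p.1 i * x j + p.2 i)))).rank < M} = 0 ∧
    ∀ᵐ p ∂(volume : Measure ((Fin N → ℝ) × (Fin N → ℝ))),
      ∀ y : Fin M → ℝ, ∃ w : Fin N → ℝ,
        (Matrix.of fun (j : Fin M) (i : Fin N) =>
          1 / (1 + Real.exp (-(p.1 i * x j + p.2 i)))) *ᵥ w = y := by
  have hS (p : (Fin N → ℝ) × (Fin N → ℝ)) : (of fun (j : Fin M) (i : Fin N) =>
      1 / (1 + exp (-(p.1 i * x j + p.2 i)))) = collocationMatrix x p.1 p.2 := by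
    simp only [collocationMatrix, sigmoid_def, one_div]
  simp only [hS]
  set F := fun p : (Fin N → ℝ) × (Fin N → ℝ) =>
    ((collocationMatrix x p.1 p.2).submatrix id (Fin.castLE hMN)).det
  have hnull : volume {p | F p = 0} = 0 :=
    (analyticZerosNull_volume_pi N).prod (analyticZerosNull_volume_pi N) F
      (analyticOnNhd_det_collocationMatrix_submatrix x _)
      (exists_det_collocationMatrix_submatrix_ne_zero hx (Fin.castLE_injective hMN))
  have hrank (p) (hp : F p ≠ 0) : (collocationMatrix x p.1 p.2).rank = M := by
    simpa using rank_eq_card_of_det_submatrix_ne_zero _ _ hp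
  refine ⟨measure_mono_null (fun p hp => not_not.mp fun hF => (hrank p hF).not_lt hp) hnull, ?_⟩
  filter_upwards [measure_eq_zero_iff_ae_notMem.mp hnull] with p hp
  exact mulVec_surjective_of_rank_eq_card _ (by simpa using hrank p hp)
end
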